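/- arXiv:1912.09349 — 7 statements merged into one kernel-verified Lean document; each statement's English description precedes it below -/
import Mathlib

section
/- Let a < b be real numbers, let m : [a,b) → ℝ be strictly increasing, continuous from the right at a, and differentiable on (a,b) with derivative bounded on every closed subinterval [a',b'] ⊂ (a,b), and let f : [a,b) → ℝ be a decreasing function that is Riemann integrable on compact subintervals. Then for every fixed R ∈ (a,b), the function r ↦ A_m(r,R;f) is decreasing on [a,R): if a ≤ r₁ ≤ r₂ < R then A_m(r₂,R;f) ≤ A_m(r₁,R;f). -/
open MeasureTheory Set

/-- The integral average `A_m(r,R;f) = (1/(m R - m r)) ∫_r^R f dm`, where the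
Riemann–Stieltjes integral `∫_r^R f dm` is expressed as `∫_r^R f(x) m'(x) dx`
(valid since `m` is differentiable with locally bounded derivative). -/
noncomputable def intAvg (m f : ℝ → ℝ) (r R : ℝ) : ℝ :=
  (m R - m r)⁻¹ * ∫ x in r..R, f x * deriv m x

theorem stmt_2 (a b : ℝ) (hab : a < b) (m f : ℝ → ℝ)
    (hm_mono : StrictMonoOn m (Set.Ico a b))
    (hm_rc : ContinuousWithinAt m (Set.Ici a) a)
    (hm_diff : ∀ x ∈ Set.Ioo a b, DifferentiableAt ℝ m x)
    (hm_bdd : ∀ a' b' : ℝ, a < a' → a' ≤ b' → b' < b →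
      ∃ C : ℝ, ∀ x ∈ Set.Icc a' b', |deriv m x| ≤ C)
    (hf_anti : AntitoneOn f (Set.Ico a b))
    (hf_int : ∀ c d : ℝ, a ≤ c → c ≤ d → d < b →
      IntervalIntegrable f MeasureTheory.volume c d)
    (R : ℝ) (haR : a < R) (hRb : R < b) :
    ∀ r₁ ∈ Set.Ico a R, ∀ r₂ ∈ Set.Ico a R, r₁ ≤ r₂ →
      intAvg m f r₂ R ≤ intAvg m f r₁ R := by
  intro r₁ hr₁ r₂ hr₂ h12
  obtain ⟨ha1, h1R⟩ := hr₁
  obtain ⟨ha2, h2R⟩ := hr₂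
  -- continuity of m on Icc a d for d < b
  have hcont : ∀ d, d < b → ContinuousOn m (Icc a d) := by
    intro d hd x hx
    rcases eq_or_lt_of_le hx.1 with h | h
    · rw [← h]
      exact (hm_rc.mono Icc_subset_Ici_self)
    · exact ((hm_diff x ⟨h, lt_of_le_of_lt hx.2 hd⟩).continuousAt).continuousWithinAt
  -- nonnegativity of deriv m on Ioo a b
  have hd0 : ∀ x ∈ Ioo a b, 0 ≤ deriv m x := by
    intro x hx
    have hder := (hm_diff x hx).hasDerivAt
    have ht : Filter.Tendsto (slope m x) (nhdsWithin x (Ioi x)) (nhds (deriv m x)) :=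
      (hasDerivAt_iff_tendsto_slope.1 hder).mono_left
        (nhdsWithin_mono x (fun y hy => hy.ne'))
    refine ge_of_tendsto ht ?_
    filter_upwards [Ioo_mem_nhdsGT_of_mem ⟨le_refl x, hx.2⟩] with y hy
    rw [slope_def_field]
    apply div_nonneg _ (sub_nonneg.2 hy.1.le)
    exact sub_nonneg.2 (hm_mono ⟨hx.1.le, hx.2⟩ ⟨(hx.1.trans hy.1).le, hy.2⟩ hy.1).le
  -- interval integrability of deriv m
  have hmint : ∀ c d, a ≤ c → c ≤ d → d < b → IntervalIntegrable (deriv m) volume c d := by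
    intro c d hac hcd hdb
    apply intervalIntegral.intervalIntegrable_deriv_of_nonneg
    · rw [uIcc_of_le hcd]
      exact (hcont d hdb).mono (Icc_subset_Icc hac le_rfl)
    · intro x hx
      rw [min_eq_left hcd, max_eq_right hcd] at hx
      exact (hm_diff x ⟨hac.trans_lt hx.1, hx.2.trans hdb⟩).hasDerivAt
    · intro x hx
      rw [min_eq_left hcd, max_eq_right hcd] at hx
      exact hd0 x ⟨hac.trans_lt hx.1, hx.2.trans hdb⟩
  -- FTC
  have hftc : ∀ c d, a ≤ c → c ≤ d → d < b → ∫ x in c..d, deriv m x = m d - m c := by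
    intro c d hac hcd hdb
    exact intervalIntegral.integral_eq_sub_of_hasDerivAt_of_le hcd
      ((hcont d hdb).mono (Icc_subset_Icc hac le_rfl))
      (fun x hx => (hm_diff x ⟨hac.trans_lt hx.1, hx.2.trans hdb⟩).hasDerivAt)
      (hmint c d hac hcd hdb)
  -- integrability of f * deriv m
  have hfm_int : ∀ c d, a ≤ c → c ≤ d → d < b →
      IntervalIntegrable (fun x => f x * deriv m x) volume c d := by
    intro c d hac hcd hdb
    rw [intervalIntegrable_iff_integrableOn_Ioc_of_le hcd]
    set M := max |f c| |f d| with hM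
    have hMd : IntegrableOn (fun x => M * deriv m x) (Ioc c d) :=
      (((hmint c d hac hcd hdb).1)).const_mul M
    have hfmeas : AEStronglyMeasurable f (volume.restrict (Ioc c d)) :=
      ((hf_int c d hac hcd hdb).1).aestronglyMeasurable
    have hmeas : AEStronglyMeasurable (fun x => f x * deriv m x)
        (volume.restrict (Ioc c d)) :=
      hfmeas.mul ((measurable_deriv m).aestronglyMeasurable.restrict)
    refine Integrable.mono' hMd hmeas ?_
    filter_upwards [ae_restrict_mem measurableSet_Ioc] with x hx
    have hxab : x ∈ Ioo a b := ⟨hac.trans_lt hx.1, hx.2.trans_lt hdb⟩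
    have hxI : x ∈ Ico a b := ⟨hxab.1.le, hxab.2⟩
    have hcI : c ∈ Ico a b := ⟨hac, lt_of_le_of_lt hcd hdb⟩
    have hdI : d ∈ Ico a b := ⟨hac.trans hcd, hdb⟩
    have hfx : |f x| ≤ M := by
      rw [abs_le]
      constructor
      · calc -M ≤ -|f d| := neg_le_neg (le_max_right _ _)
          _ ≤ f d := neg_abs_le _
          _ ≤ f x := hf_anti hxI hdI hx.2
      · calc f x ≤ f c := hf_anti hcI hxI hx.1.le
          _ ≤ |f c| := le_abs_self _
          _ ≤ M := le_max_left _ _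
    have : ‖f x * deriv m x‖ = |f x| * deriv m x := by
      rw [Real.norm_eq_abs, abs_mul, abs_of_nonneg (hd0 x hxab)]
    rw [this]
    exact mul_le_mul_of_nonneg_right hfx (hd0 x hxab)
  -- lower and upper bounds
  have hb_lo : ∀ c d, a ≤ c → c ≤ d → d < b →
      f d * (m d - m c) ≤ ∫ x in c..d, f x * deriv m x := by
    intro c d hac hcd hdb
    have := hftc c d hac hcd hdb
    calc f d * (m d - m c) = ∫ x in c..d, f d * deriv m x := by
          rw [intervalIntegral.integral_const_mul, this]
      _ ≤ ∫ x in c..d, f x * deriv m x := by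
          apply intervalIntegral.integral_mono_ae_restrict hcd
            ((hmint c d hac hcd hdb).const_mul (f d)) (hfm_int c d hac hcd hdb)
          have hne : ∀ᵐ x : ℝ ∂(volume.restrict (Icc c d)), x ≠ c := by
            refine (Filter.Eventually.filter_mono (ae_mono Measure.restrict_le_self)) ?_
            rw [ae_iff]
            simp only [not_not, setOf_eq_eq_singleton]
            exact Real.volume_singleton
          filter_upwards [ae_restrict_mem measurableSet_Icc, hne] with x hx hxc
          have hx1 : c < x := lt_of_le_of_ne hx.1 (Ne.symm hxc)
          have hxab : x ∈ Ioo a b := ⟨hac.trans_lt hx1, hx.2.trans_lt hdb⟩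
          have hfd : f d ≤ f x :=
            hf_anti ⟨hxab.1.le, hxab.2⟩ ⟨hac.trans hcd, hdb⟩ hx.2
          exact mul_le_mul_of_nonneg_right hfd (hd0 x hxab)
  have hb_hi : ∀ c d, a ≤ c → c ≤ d → d < b →
      (∫ x in c..d, f x * deriv m x) ≤ f c * (m d - m c) := by
    intro c d hac hcd hdb
    have := hftc c d hac hcd hdb
    calc (∫ x in c..d, f x * deriv m x) ≤ ∫ x in c..d, f c * deriv m x := by
          apply intervalIntegral.integral_mono_ae_restrict hcd
            (hfm_int c d hac hcd hdb) ((hmint c d hac hcd hdb).const_mul (f c))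
          have hne : ∀ᵐ x : ℝ ∂(volume.restrict (Icc c d)), x ≠ c := by
            refine (Filter.Eventually.filter_mono (ae_mono Measure.restrict_le_self)) ?_
            rw [ae_iff]
            simp only [not_not, setOf_eq_eq_singleton]
            exact Real.volume_singleton
          filter_upwards [ae_restrict_mem measurableSet_Icc, hne] with x hx hxc
          have hx1 : c < x := lt_of_le_of_ne hx.1 (Ne.symm hxc)
          have hxab : x ∈ Ioo a b := ⟨hac.trans_lt hx1, hx.2.trans_lt hdb⟩
          have hfc : f x ≤ f c :=
            hf_anti ⟨hac, hcd.trans_lt hdb⟩ ⟨hxab.1.le, hxab.2⟩ hx1.le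
          exact mul_le_mul_of_nonneg_right hfc (hd0 x hxab)
      _ = f c * (m d - m c) := by rw [intervalIntegral.integral_const_mul, this]
  -- positivity
  have hm1 : m r₁ < m R := hm_mono ⟨ha1, h1R.trans hRb⟩ ⟨haR.le, hRb⟩ h1R
  have hm2 : m r₂ < m R := hm_mono ⟨ha2, h2R.trans hRb⟩ ⟨haR.le, hRb⟩ h2R
  have hm12 : m r₁ ≤ m r₂ := by
    rcases eq_or_lt_of_le h12 with h | h
    · rw [h]
    · exact (hm_mono ⟨ha1, h1R.trans hRb⟩ ⟨ha2, h2R.trans hRb⟩ h).le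
  -- splitting
  have hsplit : (∫ x in r₁..r₂, f x * deriv m x) + (∫ x in r₂..R, f x * deriv m x)
      = ∫ x in r₁..R, f x * deriv m x :=
    intervalIntegral.integral_add_adjacent_intervals
      (hfm_int r₁ r₂ ha1 h12 (h2R.trans hRb)) (hfm_int r₂ R ha2 h2R.le hRb)
  have hJ : f r₂ * (m r₂ - m r₁) ≤ ∫ x in r₁..r₂, f x * deriv m x :=
    hb_lo r₁ r₂ ha1 h12 (h2R.trans hRb)
  have hI2 : (∫ x in r₂..R, f x * deriv m x) ≤ f r₂ * (m R - m r₂) :=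
    hb_hi r₂ R ha2 h2R.le hRb
  -- conclude
  unfold intAvg
  rw [inv_mul_eq_div, inv_mul_eq_div, div_le_div_iff₀ (by linarith) (by linarith)]
  nlinarith [mul_le_mul_of_nonneg_right hI2 (sub_nonneg.2 hm12),
    mul_le_mul_of_nonneg_left hJ (by linarith : (0:ℝ) ≤ m R - m r₂)]
end

section
/- Let a < b be real numbers, let m : [a,b) → ℝ be strictly increasing, continuous from the right at a, and differentiable on (a,b) with derivative bounded on every closed subinterval [a',b'] ⊂ (a,b), and let f : [a,b) → ℝ be a decreasing function that is Riemann integrable on compact subintervals. Then for every fixed r ∈ [a,b), the function R ↦ A_m(r,R;f) is decreasing on (r,b): if r < R₁ ≤ R₂ < b then A_m(r,R₂;f) ≤ A_m(r,R₁;f). -/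
open MeasureTheory Set

theorem stmt_3 (a b : ℝ) (hab : a < b) (m f : ℝ → ℝ)
    (hm_mono : StrictMonoOn m (Set.Ico a b))
    (hm_rc : ContinuousWithinAt m (Set.Ici a) a)
    (hm_diff : ∀ x ∈ Set.Ioo a b, DifferentiableAt ℝ m x)
    (hm_bdd : ∀ a' b' : ℝ, a < a' → a' ≤ b' → b' < b →
      ∃ C : ℝ, ∀ x ∈ Set.Icc a' b', |deriv m x| ≤ C)
    (hf_anti : AntitoneOn f (Set.Ico a b))
    (hf_int : ∀ c d : ℝ, a ≤ c → c ≤ d → d < b →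
      IntervalIntegrable f MeasureTheory.volume c d)
    (r : ℝ) (har : a ≤ r) (hrb : r < b) :
    ∀ R₁ ∈ Set.Ioo r b, ∀ R₂ ∈ Set.Ioo r b, R₁ ≤ R₂ →
      intAvg m f r R₂ ≤ intAvg m f r R₁ := by
  -- the derivative of m is nonnegative on (a,b)
  have hderiv_nonneg : ∀ x ∈ Set.Ioo a b, 0 ≤ deriv m x := by
    intro x hx
    have hd := (hm_diff x hx).hasDerivAt
    have htend : Filter.Tendsto (slope m x) (nhdsWithin x (Set.Ioi x)) (nhds (deriv m x)) :=
      (hasDerivAt_iff_tendsto_slope.1 hd).mono_left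
        (nhdsWithin_mono x (fun y hy => ne_of_gt (mem_Ioi.1 hy)))
    refine ge_of_tendsto htend ?_
    filter_upwards [Ioo_mem_nhdsGT_of_mem ⟨le_refl x, hx.2⟩] with y hy
    have hxy : x < y := hy.1
    have hmxy : m x ≤ m y :=
      (hm_mono ⟨hx.1.le, hx.2⟩ ⟨hx.1.le.trans hxy.le, hy.2⟩ hxy).le
    have : slope m x y = (m y - m x) / (y - x) := by
      simp [slope, vsub_eq_sub, div_eq_inv_mul]
    rw [this]
    exact div_nonneg (by linarith) (by linarith)
  -- m is continuous on [c,d] for a ≤ c, d < b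
  have hcont : ∀ c d : ℝ, a ≤ c → d < b → ContinuousOn m (Set.Icc c d) := by
    intro c d hc hd x hx
    rcases eq_or_lt_of_le (hc.trans hx.1) with h | h
    · subst h
      exact hm_rc.mono (fun y hy => hc.trans hy.1)
    · exact ((hm_diff x ⟨h, lt_of_le_of_lt hx.2 hd⟩).continuousAt).continuousWithinAt
  -- deriv m is integrable on (c,d] for a ≤ c, d < b
  have hmint : ∀ c d : ℝ, a ≤ c → d < b → IntegrableOn (deriv m) (Set.Ioc c d) := by
    intro c d hc hd
    refine intervalIntegral.integrableOn_deriv_of_nonneg (hcont c d hc hd) ?_ ?_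
    · intro x hx
      exact (hm_diff x ⟨lt_of_le_of_lt hc hx.1, lt_trans hx.2 hd⟩).hasDerivAt
    · intro x hx
      exact hderiv_nonneg x ⟨lt_of_le_of_lt hc hx.1, lt_trans hx.2 hd⟩
  -- the fundamental theorem of calculus for m
  have hFTC : ∀ c d : ℝ, a ≤ c → c ≤ d → d < b →
      ∫ x in c..d, deriv m x = m d - m c := by
    intro c d hc hcd hd
    refine intervalIntegral.integral_eq_sub_of_hasDeriv_right_of_le_real hcd
      (hcont c d hc hd) ?_ ?_
    · intro x hx
      exact ((hm_diff x ⟨lt_of_le_of_lt hc hx.1, lt_trans hx.2 hd⟩).hasDerivAt).hasDerivWithinAt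
    · rw [integrableOn_Icc_iff_integrableOn_Ioc]
      exact hmint c d hc hd
  -- integrability of f·m' on (c,d]
  have hg_int : ∀ c d : ℝ, a ≤ c → c ≤ d → d < b →
      IntegrableOn (fun x => f x * deriv m x) (Set.Ioc c d) := by
    intro c d hc hcd hd
    have hf' : IntegrableOn f (Set.Ioc c d) := (hf_int c d hc hcd hd).1
    have hC : ∀ x ∈ Set.Ioc c d, |f x| ≤ max |f c| |f d| := by
      intro x hx
      have hx1 : x ∈ Set.Ico a b := ⟨hc.trans hx.1.le, lt_of_le_of_lt hx.2 hd⟩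
      have hcI : c ∈ Set.Ico a b := ⟨hc, lt_of_le_of_lt hcd hd⟩
      have hdI : d ∈ Set.Ico a b := ⟨hc.trans hcd, hd⟩
      have h1 : f x ≤ f c := hf_anti hcI hx1 hx.1.le
      have h2 : f d ≤ f x := hf_anti hx1 hdI hx.2
      refine abs_le.2 ⟨?_, ?_⟩
      · have := neg_abs_le (f d)
        have := le_max_right |f c| |f d|
        linarith
      · have := le_abs_self (f c)
        have := le_max_left |f c| |f d|
        linarith
    refine MeasureTheory.Integrable.mono'
      ((hmint c d hc hd).const_mul (max |f c| |f d|))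
      (hf'.aestronglyMeasurable.mul ((measurable_deriv m).aestronglyMeasurable.restrict)) ?_
    filter_upwards [ae_restrict_mem measurableSet_Ioc] with x hx
    have hd0 : 0 ≤ deriv m x :=
      hderiv_nonneg x ⟨lt_of_le_of_lt hc hx.1, lt_of_le_of_lt hx.2 hd⟩
    rw [Real.norm_eq_abs, abs_mul, abs_of_nonneg hd0]
    exact mul_le_mul_of_nonneg_right (hC x hx) hd0
  -- main argument
  intro R₁ hR₁ R₂ hR₂ h12
  obtain ⟨hrR₁, hR₁b⟩ := hR₁
  obtain ⟨hrR₂, hR₂b⟩ := hR₂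
  have hrI : r ∈ Set.Ico a b := ⟨har, hrb⟩
  have hR₁I : R₁ ∈ Set.Ico a b := ⟨har.trans hrR₁.le, hR₁b⟩
  have hR₂I : R₂ ∈ Set.Ico a b := ⟨har.trans hrR₂.le, hR₂b⟩
  have haR₁ : a ≤ R₁ := har.trans hrR₁.le
  set u := m R₁ - m r with hu_def
  set v := m R₂ - m R₁ with hv_def
  have hu : 0 < u := sub_pos.2 (hm_mono hrI hR₁I hrR₁)
  have hv : 0 ≤ v := sub_nonneg.2 (hm_mono.monotoneOn hR₁I hR₂I h12)
  have hint1 : IntegrableOn (fun x => f x * deriv m x) (Set.Ioc r R₁) :=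
    hg_int r R₁ har hrR₁.le hR₁b
  have hint2 : IntegrableOn (fun x => f x * deriv m x) (Set.Ioc R₁ R₂) :=
    hg_int R₁ R₂ haR₁ h12 hR₂b
  set J₁ := ∫ x in r..R₁, f x * deriv m x with hJ₁
  set J₂ := ∫ x in R₁..R₂, f x * deriv m x with hJ₂
  have hsplit : ∫ x in r..R₂, f x * deriv m x = J₁ + J₂ := by
    rw [hJ₁, hJ₂]
    exact (intervalIntegral.integral_add_adjacent_intervals
      ((intervalIntegrable_iff_integrableOn_Ioc_of_le hrR₁.le).2 hint1)
      ((intervalIntegrable_iff_integrableOn_Ioc_of_le h12).2 hint2)).symm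
  -- lower bound for J₁
  have hconst1 : ∫ x in Set.Ioc r R₁, f R₁ * deriv m x = f R₁ * u := by
    rw [← intervalIntegral.integral_of_le hrR₁.le, intervalIntegral.integral_const_mul,
      hFTC r R₁ har hrR₁.le hR₁b]
  have h1 : f R₁ * u ≤ J₁ := by
    rw [hJ₁, intervalIntegral.integral_of_le hrR₁.le, ← hconst1]
    refine MeasureTheory.setIntegral_mono_on
      ((hmint r R₁ har hR₁b).const_mul _) hint1 measurableSet_Ioc ?_
    intro x hx
    have hxm : x ∈ Set.Ioo a b := ⟨lt_of_le_of_lt har hx.1, lt_of_le_of_lt hx.2 hR₁b⟩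
    exact mul_le_mul_of_nonneg_right
      (hf_anti ⟨hxm.1.le, hxm.2⟩ hR₁I hx.2) (hderiv_nonneg x hxm)
  -- upper bound for J₂
  have hconst2 : ∫ x in Set.Ioc R₁ R₂, f R₁ * deriv m x = f R₁ * v := by
    rw [← intervalIntegral.integral_of_le h12, intervalIntegral.integral_const_mul,
      hFTC R₁ R₂ haR₁ h12 hR₂b]
  have h2 : J₂ ≤ f R₁ * v := by
    rw [hJ₂, intervalIntegral.integral_of_le h12, ← hconst2]
    refine MeasureTheory.setIntegral_mono_on hint2
      ((hmint R₁ R₂ haR₁ hR₂b).const_mul _) measurableSet_Ioc ?_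
    intro x hx
    have hxm : x ∈ Set.Ioo a b := ⟨lt_of_le_of_lt haR₁ hx.1, lt_of_le_of_lt hx.2 hR₂b⟩
    exact mul_le_mul_of_nonneg_right
      (hf_anti hR₁I ⟨hxm.1.le, hxm.2⟩ hx.1.le) (hderiv_nonneg x hxm)
  -- conclude
  have hsum : m R₂ - m r = u + v := by rw [hu_def, hv_def]; ring
  show (m R₂ - m r)⁻¹ * (∫ x in r..R₂, f x * deriv m x) ≤
      (m R₁ - m r)⁻¹ * (∫ x in r..R₁, f x * deriv m x)
  rw [hsplit, hsum, ← hJ₁, ← hu_def]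
  rw [inv_mul_eq_div, inv_mul_eq_div, div_le_div_iff₀ (by linarith) hu]
  nlinarith [mul_le_mul_of_nonneg_left h2 hu.le, mul_le_mul_of_nonneg_left h1 hv]
end

section
/- Let a < b be real numbers, let m : [a,b) → ℝ be strictly increasing, continuous from the right at a, and differentiable on (a,b) with derivative bounded on every closed subinterval [a',b'] ⊂ (a,b), and let f : [a,b) → ℝ be a decreasing function that is Riemann integrable on compact subintervals. Then for every R ∈ (a,b), the supremum over r ∈ [a,R) of A_m(r,R;f) is attained at r = a, i.e. sup_{r ∈ [a,R)} A_m(r,R;f) = A_m(a,R;f). -/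
open MeasureTheory Set

theorem stmt_4 (a b : ℝ) (hab : a < b) (m f : ℝ → ℝ)
    (hm_mono : StrictMonoOn m (Set.Ico a b))
    (hm_rc : ContinuousWithinAt m (Set.Ici a) a)
    (hm_diff : ∀ x ∈ Set.Ioo a b, DifferentiableAt ℝ m x)
    (hm_bdd : ∀ a' b' : ℝ, a < a' → a' ≤ b' → b' < b →
      ∃ C : ℝ, ∀ x ∈ Set.Icc a' b', |deriv m x| ≤ C)
    (hf_anti : AntitoneOn f (Set.Ico a b))
    (hf_int : ∀ c d : ℝ, a ≤ c → c ≤ d → d < b →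
      IntervalIntegrable f MeasureTheory.volume c d)
    (R : ℝ) (haR : a < R) (hRb : R < b) :
    sSup ((fun r => intAvg m f r R) '' Set.Ico a R) = intAvg m f a R := by
  -- derivative of m is nonnegative on (a,b)
  have hderiv_nonneg : ∀ x ∈ Set.Ioo a b, 0 ≤ deriv m x := by
    intro x hx
    have hd := (hm_diff x hx).hasDerivAt
    rw [hasDerivAt_iff_tendsto_slope] at hd
    have h2 : Filter.Tendsto (slope m x) (nhdsWithin x (Set.Ioi x)) (nhds (deriv m x)) :=
      hd.mono_left (nhdsWithin_mono x fun y hy => ne_of_gt hy)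
    refine ge_of_tendsto h2 ?_
    filter_upwards [Ioo_mem_nhdsGT_of_mem ⟨le_rfl, hx.2⟩] with y hy
    have hmlt : m x < m y :=
      hm_mono ⟨hx.1.le, hx.2⟩ ⟨(hx.1.trans hy.1).le, hy.2⟩ hy.1
    rw [slope_def_field]
    exact div_nonneg (sub_nonneg.2 hmlt.le) (sub_nonneg.2 hy.1.le)
  -- continuity of m on [a,R]
  have hcontm : ContinuousOn m (Set.Icc a R) := by
    intro x hx
    rcases eq_or_lt_of_le hx.1 with h | h
    · subst h
      exact hm_rc.mono (fun y hy => hy.1)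
    · exact ((hm_diff x ⟨h, lt_of_le_of_lt hx.2 hRb⟩).continuousAt).continuousWithinAt
  -- integrability of deriv m on (a,R]
  have hIntm' : IntegrableOn (deriv m) (Set.Ioc a R) volume := by
    apply intervalIntegral.integrableOn_deriv_of_nonneg hcontm
    · exact fun x hx => (hm_diff x ⟨hx.1, hx.2.trans hRb⟩).hasDerivAt
    · exact fun x hx => hderiv_nonneg x ⟨hx.1, hx.2.trans hRb⟩
  -- bound on f
  set M : ℝ := max |f a| |f R| with hM
  have hfb : ∀ x ∈ Set.Icc a R, |f x| ≤ M := by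
    intro x hx
    have hxm : x ∈ Set.Ico a b := ⟨hx.1, lt_of_le_of_lt hx.2 hRb⟩
    have h1 : f x ≤ f a := hf_anti ⟨le_rfl, hab⟩ hxm hx.1
    have h2 : f R ≤ f x := hf_anti hxm ⟨haR.le, hRb⟩ hx.2
    rw [abs_le]
    have h3 : -|f R| ≤ f x := (neg_abs_le (f R)).trans h2
    have h4 : f x ≤ |f a| := h1.trans (le_abs_self _)
    exact ⟨by simp only [hM, neg_le]; linarith [le_max_right |f a| |f R|],
      h4.trans (le_max_left _ _)⟩
  -- integrability of f * deriv m on (a,R]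
  have hfm_int : IntegrableOn (fun x => f x * deriv m x) (Set.Ioc a R) volume := by
    refine Integrable.bdd_mul (c := M) hIntm'
      ((hf_int a R le_rfl haR.le hRb).1.aestronglyMeasurable) ?_
    filter_upwards [ae_restrict_mem measurableSet_Ioc] with x hx
    exact hfb x ⟨hx.1.le, hx.2⟩
  -- interval integrability of f * deriv m on subintervals of [a,R]
  have hII : ∀ u v : ℝ, a ≤ u → u ≤ v → v ≤ R →
      IntervalIntegrable (fun x => f x * deriv m x) volume u v := by
    intro u v hu huv hv
    rw [intervalIntegrable_iff_integrableOn_Ioc_of_le huv]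
    exact hfm_int.mono_set (Set.Ioc_subset_Ioc hu hv)
  have hIIm : ∀ u v : ℝ, a ≤ u → u ≤ v → v ≤ R →
      IntervalIntegrable (deriv m) volume u v := by
    intro u v hu huv hv
    rw [intervalIntegrable_iff_integrableOn_Ioc_of_le huv]
    exact hIntm'.mono_set (Set.Ioc_subset_Ioc hu hv)
  -- FTC on subintervals of [a,R]
  have hFTC : ∀ u v : ℝ, a ≤ u → u ≤ v → v ≤ R →
      (∫ x in u..v, deriv m x) = m v - m u := by
    intro u v hu huv hv
    apply intervalIntegral.integral_eq_sub_of_hasDeriv_right_of_le huv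
      (hcontm.mono (Set.Icc_subset_Icc hu hv))
    · intro x hx
      exact ((hm_diff x ⟨lt_of_le_of_lt hu hx.1,
        lt_of_lt_of_le hx.2 (hv.trans hRb.le)⟩).hasDerivAt).hasDerivWithinAt
    · exact hIIm u v hu huv hv
  -- key inequality
  have key : ∀ r ∈ Set.Ico a R, intAvg m f r R ≤ intAvg m f a R := by
    intro r hr
    rcases eq_or_lt_of_le hr.1 with h | har
    · rw [← h]
    have hrb : r < b := hr.2.trans hRb
    set α : ℝ := m r - m a with hα
    set β : ℝ := m R - m r with hβ
    have hαpos : 0 < α := sub_pos.2 (hm_mono ⟨le_rfl, hab⟩ ⟨hr.1, hrb⟩ har)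
    have hβpos : 0 < β := sub_pos.2 (hm_mono ⟨hr.1, hrb⟩ ⟨haR.le, hRb⟩ hr.2)
    set I₁ : ℝ := ∫ x in a..r, f x * deriv m x with hI₁
    set I₂ : ℝ := ∫ x in r..R, f x * deriv m x with hI₂
    -- I₁ ≥ f r * α
    have hconst1 : (∫ x in a..r, f r * deriv m x) = f r * α := by
      rw [intervalIntegral.integral_const_mul, hFTC a r le_rfl har.le hr.2.le]
    have h1 : f r * α ≤ I₁ := by
      rw [← hconst1]
      apply intervalIntegral.integral_mono_ae_restrict har.le
        ((hIIm a r le_rfl har.le hr.2.le).const_mul _) (hII a r le_rfl har.le hr.2.le)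
      have hnull : (volume.restrict (Set.Icc a r)) {a} = 0 := by
        simp [Measure.restrict_apply']
      filter_upwards [ae_restrict_mem measurableSet_Icc,
        measure_eq_zero_iff_ae_notMem.1 hnull] with x hx hxa
      have hxa' : a < x := lt_of_le_of_ne hx.1 (fun h => hxa h.symm)
      have hxb : x < b := lt_of_le_of_lt hx.2 hrb
      have hd : 0 ≤ deriv m x := hderiv_nonneg x ⟨hxa', hxb⟩
      have hfx : f r ≤ f x := hf_anti ⟨hxa'.le, hxb⟩ ⟨hr.1, hrb⟩ hx.2
      exact mul_le_mul_of_nonneg_right hfx hd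
    -- I₂ ≤ f r * β
    have hconst2 : (∫ x in r..R, f r * deriv m x) = f r * β := by
      rw [intervalIntegral.integral_const_mul, hFTC r R hr.1 hr.2.le le_rfl]
    have h2 : I₂ ≤ f r * β := by
      rw [← hconst2]
      apply intervalIntegral.integral_mono_on hr.2.le (hII r R hr.1 hr.2.le le_rfl)
        ((hIIm r R hr.1 hr.2.le le_rfl).const_mul _)
      intro x hx
      have hxab : x ∈ Set.Ioo a b := ⟨har.trans_le hx.1, lt_of_le_of_lt hx.2 hRb⟩
      have hd : 0 ≤ deriv m x := hderiv_nonneg x hxab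
      have hfx : f x ≤ f r := hf_anti ⟨hr.1, hrb⟩ ⟨hxab.1.le, hxab.2⟩ hx.1
      exact mul_le_mul_of_nonneg_right hfx hd
    -- splitting
    have hsplit : (∫ x in a..R, f x * deriv m x) = I₁ + I₂ :=
      (intervalIntegral.integral_add_adjacent_intervals
        (hII a r le_rfl har.le hr.2.le) (hII r R hr.1 hr.2.le le_rfl)).symm
    have hmRa : m R - m a = α + β := by ring
    unfold intAvg
    rw [hsplit, hmRa, ← hI₂]
    rw [inv_mul_eq_div, inv_mul_eq_div, div_le_div_iff₀ hβpos (by linarith)]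
    nlinarith [mul_le_mul_of_nonneg_right h2 hαpos.le,
      mul_le_mul_of_nonneg_right h1 hβpos.le]
  -- conclude
  apply IsGreatest.csSup_eq
  constructor
  · exact ⟨a, ⟨le_rfl, haR⟩, rfl⟩
  · rintro x ⟨r, hr, rfl⟩
    exact key r hr
end

section
/- Let a ∈ ℝ and b ∈ ℝ ∪ {+∞} with a < b, let m : [a,b) → ℝ be strictly increasing, continuous from the right at a, differentiable on (a,b) with derivative bounded on every closed subinterval [a',b'] ⊂ (a,b), and satisfying m(x) → +∞ as x → b⁻. Let f : [a,b) → [0,∞) be Riemann integrable on compact subintervals with sup_{[a,b)} f < +∞ and f(x) → 0 as x → b⁻. Then the function R ↦ A_m(a,R; m^→[f]) is decreasing on (a,b). -/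
open MeasureTheory Set Filter

/-- The right maximization `m^→[f](r) = sup_{x ∈ [r,b)} f x`, for `b ∈ ℝ ∪ {+∞}`. -/
noncomputable def rightMax (b : EReal) (f : ℝ → ℝ) (r : ℝ) : ℝ :=
  sSup (f '' {x : ℝ | r ≤ x ∧ (x : EReal) < b})

/-- The filter of real numbers tending to `b ∈ ℝ ∪ {+∞}` from the left. -/
noncomputable def toBFilter (b : EReal) : Filter ℝ :=
  Filter.comap (Real.toEReal) (nhdsWithin b (Set.Iio b))

/-!
The right maximization `g = m^→[f]` is antitone, being a supremum over shrinking tails, and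
`dm = m' dx` with `m' ≥ 0`. Averages of an antitone `g` against a nonnegative weight decrease:
on `[a, R₁]` we have `g ≥ g R₁` and on `[R₁, R₂]` we have `g ≤ g R₁`, so the average over
`[a, R₁]` is at least `g R₁`, and appending `[R₁, R₂]` only mixes in values at most `g R₁`.
-/

theorem rightMax_antitoneOn {b : EReal} {f : ℝ → ℝ} {a : ℝ}
    (hf : BddAbove (f '' {x : ℝ | a ≤ x ∧ (x : EReal) < b})) :
    AntitoneOn (rightMax b f) {x : ℝ | a ≤ x ∧ (x : EReal) < b} := by
  have tail_mono {r s : ℝ} (hrs : r ≤ s) :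
      {x : ℝ | s ≤ x ∧ (x : EReal) < b} ⊆ {x | r ≤ x ∧ (x : EReal) < b} :=
    fun x hx => ⟨hrs.trans hx.1, hx.2⟩
  intro r hr s hs hrs
  exact csSup_le_csSup (hf.mono (image_mono (tail_mono hr.1)))
    ⟨f s, s, ⟨le_rfl, hs.2⟩, rfl⟩ (image_mono (tail_mono hrs))

theorem MonotoneOn.deriv_nonneg_of_mem_nhds {g : ℝ → ℝ} {s : Set ℝ} {x : ℝ}
    (hg : MonotoneOn g s) (hs : s ∈ nhds x) : 0 ≤ deriv g x :=
  derivWithin_of_mem_nhds (f := g) hs ▸ hg.derivWithin_nonneg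

theorem MonotoneOn.integral_deriv_eq_sub {m : ℝ → ℝ} {a b : ℝ} (hab : a ≤ b)
    (hmono : MonotoneOn m (Icc a b)) (hcont : ContinuousOn m (Icc a b))
    (hdiff : ∀ x ∈ Ioo a b, DifferentiableAt ℝ m x) :
    ∫ x in a..b, deriv m x = m b - m a :=
  intervalIntegral.integral_eq_sub_of_hasDerivAt_of_le hab hcont
    (fun x hx => (hdiff x hx).hasDerivAt) (uIcc_of_le hab ▸ hmono).intervalIntegrable_deriv

theorem AntitoneOn.intervalIntegrable_mul {g w : ℝ → ℝ} {a b : ℝ} (hab : a ≤ b)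
    (hg : AntitoneOn g (Icc a b)) (hw : IntervalIntegrable w volume a b) :
    IntervalIntegrable (fun x => g x * w x) volume a b := by
  rw [intervalIntegrable_iff_integrableOn_Ioc_of_le hab] at hw ⊢
  have hg_bound : ∀ x ∈ Ioc a b, ‖g x‖ ≤ max |g b| |g a| := fun x hx =>
    abs_le_max_abs_abs (hg (Ioc_subset_Icc_self hx) (right_mem_Icc.mpr hab) hx.2)
      (hg (left_mem_Icc.mpr hab) (Ioc_subset_Icc_self hx) hx.1.le)
  exact hw.bdd_mul
    (aemeasurable_restrict_of_antitoneOn measurableSet_Ioc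
      (hg.mono Ioc_subset_Icc_self)).aestronglyMeasurable
    (ae_restrict_of_forall_mem measurableSet_Ioc hg_bound)

theorem weightedAverage_le_of_antitoneOn {g w : ℝ → ℝ} {a R₁ R₂ : ℝ} (h₁ : a ≤ R₁)
    (h₁₂ : R₁ ≤ R₂) (hg : AntitoneOn g (Icc a R₂)) (hw : IntervalIntegrable w volume a R₂)
    (hw_nonneg : ∀ x ∈ Ioo a R₂, 0 ≤ w x) (hpos : 0 < ∫ x in a..R₁, w x) :
    (∫ x in a..R₂, w x)⁻¹ * ∫ x in a..R₂, g x * w x ≤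
      (∫ x in a..R₁, w x)⁻¹ * ∫ x in a..R₁, g x * w x := by
  have hR₁ : R₁ ∈ Icc a R₂ := ⟨h₁, h₁₂⟩
  have hgw := hg.intervalIntegrable_mul (h₁.trans h₁₂) hw
  have hw₁ := hw.mono_set (uIcc_subset_uIcc_left (mem_uIcc_of_le h₁ h₁₂))
  have hw₂ := hw.mono_set (uIcc_subset_uIcc_right (mem_uIcc_of_le h₁ h₁₂))
  have hgw₁ := hgw.mono_set (uIcc_subset_uIcc_left (mem_uIcc_of_le h₁ h₁₂))
  have hgw₂ := hgw.mono_set (uIcc_subset_uIcc_right (mem_uIcc_of_le h₁ h₁₂))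
  have hJ₁ : g R₁ * ∫ x in a..R₁, w x ≤ ∫ x in a..R₁, g x * w x := by
    rw [← intervalIntegral.integral_const_mul]
    refine intervalIntegral.integral_mono_on_of_le_Ioo h₁ (hw₁.const_mul _) hgw₁ fun x hx => ?_
    exact mul_le_mul_of_nonneg_right (hg ⟨hx.1.le, hx.2.le.trans h₁₂⟩ hR₁ hx.2.le)
      (hw_nonneg x ⟨hx.1, hx.2.trans_le h₁₂⟩)
  have hJ₂ : ∫ x in R₁..R₂, g x * w x ≤ g R₁ * ∫ x in R₁..R₂, w x := by
    rw [← intervalIntegral.integral_const_mul]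
    refine intervalIntegral.integral_mono_on_of_le_Ioo h₁₂ hgw₂ (hw₂.const_mul _) fun x hx => ?_
    exact mul_le_mul_of_nonneg_right (hg hR₁ ⟨h₁.trans hx.1.le, hx.2.le⟩ hx.1.le)
      (hw_nonneg x ⟨h₁.trans_lt hx.1, hx.2⟩)
  have hM₂ : 0 ≤ ∫ x in R₁..R₂, w x := by
    simpa using intervalIntegral.integral_mono_on_of_le_Ioo h₁₂ intervalIntegrable_const hw₂
      fun x hx => hw_nonneg x ⟨h₁.trans_lt hx.1, hx.2⟩
  rw [← intervalIntegral.integral_add_adjacent_intervals hw₁ hw₂,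
    ← intervalIntegral.integral_add_adjacent_intervals hgw₁ hgw₂, ← div_eq_inv_mul,
    ← div_eq_inv_mul, div_le_div_iff₀ (by linarith) hpos]
  nlinarith [mul_le_mul_of_nonneg_right hJ₂ hpos.le, mul_le_mul_of_nonneg_right hJ₁ hM₂]

theorem stmt_5_general (a : ℝ) (b : EReal) (m f : ℝ → ℝ)
    (hm_mono : StrictMonoOn m {x : ℝ | a ≤ x ∧ (x : EReal) < b})
    (hm_rc : ContinuousWithinAt m (Set.Ici a) a)
    (hm_diff : ∀ x : ℝ, a < x → (x : EReal) < b → DifferentiableAt ℝ m x)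
    (hf_bdd : ∃ C : ℝ, ∀ x : ℝ, a ≤ x → (x : EReal) < b → f x ≤ C) :
    ∀ R₁ R₂ : ℝ, a < R₁ → R₁ ≤ R₂ → (R₂ : EReal) < b →
      intAvg m (rightMax b f) a R₂ ≤ intAvg m (rightMax b f) a R₁ := by
  intro R₁ R₂ hR₁ hR₁₂ hR₂b
  obtain ⟨C, hC⟩ := hf_bdd
  have hsub : ∀ {R}, R ≤ R₂ → Icc a R ⊆ {x : ℝ | a ≤ x ∧ (x : EReal) < b} := fun hR x hx =>
    ⟨hx.1, (EReal.coe_le_coe_iff.mpr (hx.2.trans hR)).trans_lt hR₂b⟩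
  have hmono {R} (hR : R ≤ R₂) : MonotoneOn m (Icc a R) := hm_mono.monotoneOn.mono (hsub hR)
  have hdiff {R} (hR : R ≤ R₂) : ∀ x ∈ Ioo a R, DifferentiableAt ℝ m x := fun x hx =>
    hm_diff x hx.1 (hsub hR (Ioo_subset_Icc_self hx)).2
  have hcont {R} (hR : R ≤ R₂) : ContinuousOn m (Icc a R) := fun x hx => by
    rcases hx.1.eq_or_lt with rfl | hax
    · exact hm_rc.mono Icc_subset_Ici_self
    · exact (hm_diff x hax (hsub hR hx).2).continuousAt.continuousWithinAt
  have hg : AntitoneOn (rightMax b f) (Icc a R₂) :=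
    (rightMax_antitoneOn ⟨C, by rintro _ ⟨x, hx, rfl⟩; exact hC x hx.1 hx.2⟩).mono (hsub le_rfl)
  have hm_pos : 0 < m R₁ - m a := sub_pos.mpr <|
    hm_mono (hsub hR₁₂ (left_mem_Icc.mpr hR₁.le)) (hsub hR₁₂ (right_mem_Icc.mpr hR₁.le)) hR₁
  have haR₂ : a ≤ R₂ := hR₁.le.trans hR₁₂
  have havg := weightedAverage_le_of_antitoneOn hR₁.le hR₁₂ hg
    (uIcc_of_le haR₂ ▸ hmono le_rfl).intervalIntegrable_deriv
    (fun x hx => (hmono le_rfl).deriv_nonneg_of_mem_nhds (Icc_mem_nhds hx.1 hx.2))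
    (by rwa [(hmono hR₁₂).integral_deriv_eq_sub hR₁.le (hcont hR₁₂) (hdiff hR₁₂)])
  unfold intAvg
  rwa [(hmono hR₁₂).integral_deriv_eq_sub hR₁.le (hcont hR₁₂) (hdiff hR₁₂),
    (hmono le_rfl).integral_deriv_eq_sub haR₂ (hcont le_rfl) (hdiff le_rfl)] at havg

theorem stmt_5 (a : ℝ) (b : EReal) (hab : (a : EReal) < b) (m f : ℝ → ℝ)
    (hm_mono : StrictMonoOn m {x : ℝ | a ≤ x ∧ (x : EReal) < b})
    (hm_rc : ContinuousWithinAt m (Set.Ici a) a)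
    (hm_diff : ∀ x : ℝ, a < x → (x : EReal) < b → DifferentiableAt ℝ m x)
    (hm_bdd : ∀ a' b' : ℝ, a < a' → a' ≤ b' → (b' : EReal) < b →
      ∃ C : ℝ, ∀ x ∈ Set.Icc a' b', |deriv m x| ≤ C)
    (hm_top : Filter.Tendsto m (toBFilter b) Filter.atTop)
    (hf_nonneg : ∀ x : ℝ, a ≤ x → (x : EReal) < b → 0 ≤ f x)
    (hf_int : ∀ c d : ℝ, a ≤ c → c ≤ d → (d : EReal) < b →
      IntervalIntegrable f MeasureTheory.volume c d)
    (hf_bdd : ∃ C : ℝ, ∀ x : ℝ, a ≤ x → (x : EReal) < b → f x ≤ C)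
    (hf_zero : Filter.Tendsto f (toBFilter b) (nhds 0)) :
    ∀ R₁ R₂ : ℝ, a < R₁ → R₁ ≤ R₂ → (R₂ : EReal) < b →
      intAvg m (rightMax b f) a R₂ ≤ intAvg m (rightMax b f) a R₁ :=
  stmt_5_general a b m f hm_mono hm_rc hm_diff hf_bdd
end

section
/- Let a ∈ ℝ and b ∈ ℝ ∪ {+∞} with a < b, let m : [a,b) → ℝ be strictly increasing, continuous from the right at a, differentiable on (a,b) with derivative bounded on every closed subinterval [a',b'] ⊂ (a,b), and satisfying m(x) → +∞ as x → b⁻. Let f : [a,b) → [0,∞) satisfy sup_{[a,b)} f < +∞ and f(x) → 0 as x → b⁻, and let n : [a,b) → [0,∞) be increasing with n(a) > 0, bounded on every interval [a,b'] ⊂ [a,b), and n(x) → +∞ as x → b⁻. Assume the relevant Riemann–Stieltjes integrals are well defined. Then for all a ≤ r < R < b, one has f(R) ≤ A_m(r,R; (1/n)·m^←[n·m^→[f]]). -/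
open MeasureTheory Set Filter

/-- The left maximization `m^←[g](r) = sup_{x ∈ [a,r]} g x`. -/
noncomputable def leftMax (a : ℝ) (g : ℝ → ℝ) (r : ℝ) : ℝ :=
  sSup (g '' Set.Icc a r)

theorem stmt_8 (a : ℝ) (b : EReal) (hab : (a : EReal) < b) (m f n : ℝ → ℝ)
    (hm_mono : StrictMonoOn m {x : ℝ | a ≤ x ∧ (x : EReal) < b})
    (hm_rc : ContinuousWithinAt m (Set.Ici a) a)
    (hm_diff : ∀ x : ℝ, a < x → (x : EReal) < b → DifferentiableAt ℝ m x)
    (hm_bdd : ∀ a' b' : ℝ, a < a' → a' ≤ b' → (b' : EReal) < b →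
      ∃ C : ℝ, ∀ x ∈ Set.Icc a' b', |deriv m x| ≤ C)
    (hm_top : Filter.Tendsto m (toBFilter b) Filter.atTop)
    (hf_nonneg : ∀ x : ℝ, a ≤ x → (x : EReal) < b → 0 ≤ f x)
    (hf_bdd : ∃ C : ℝ, ∀ x : ℝ, a ≤ x → (x : EReal) < b → f x ≤ C)
    (hf_zero : Filter.Tendsto f (toBFilter b) (nhds 0))
    (hn_nonneg : ∀ x : ℝ, a ≤ x → (x : EReal) < b → 0 ≤ n x)
    (hn_mono : MonotoneOn n {x : ℝ | a ≤ x ∧ (x : EReal) < b})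
    (hn_pos : 0 < n a)
    (hn_bdd : ∀ b' : ℝ, a ≤ b' → (b' : EReal) < b →
      ∃ C : ℝ, ∀ x ∈ Set.Icc a b', n x ≤ C)
    (hn_top : Filter.Tendsto n (toBFilter b) Filter.atTop)
    -- the relevant Riemann–Stieltjes integrals are well defined:
    (hg_int : ∀ c d : ℝ, a ≤ c → c ≤ d → (d : EReal) < b →
      IntervalIntegrable
        (fun x => ((n x)⁻¹ * leftMax a (fun t => n t * rightMax b f t) x) * deriv m x)
        MeasureTheory.volume c d) :
    ∀ r R : ℝ, a ≤ r → r < R → (R : EReal) < b →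
      f R ≤ intAvg m (fun x => (n x)⁻¹ * leftMax a (fun t => n t * rightMax b f t) x) r R := by
  intro r R hr hrR hRb
  have coe_lt : ∀ {x : ℝ}, x ≤ R → (x : EReal) < b := fun {x} hx =>
    lt_of_le_of_lt (EReal.coe_le_coe_iff.mpr hx) hRb
  obtain ⟨C, hC⟩ := hf_bdd
  set g : ℝ → ℝ := fun x => (n x)⁻¹ * leftMax a (fun t => n t * rightMax b f t) x with hgdef
  have haR : a ≤ R := hr.trans hrR.le
  have hfR0 : 0 ≤ f R := hf_nonneg R haR hRb
  -- rightMax is bounded above and at least f R on [a, R]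
  have hrm_bdd : ∀ t : ℝ, a ≤ t → BddAbove (f '' {x : ℝ | t ≤ x ∧ (x : EReal) < b}) := by
    intro t ht
    refine ⟨C, ?_⟩
    rintro _ ⟨y, ⟨hy1, hy2⟩, rfl⟩
    exact hC y (ht.trans hy1) hy2
  have hrm_ge : ∀ t : ℝ, a ≤ t → t ≤ R → f R ≤ rightMax b f t := by
    intro t ht htR
    exact le_csSup (hrm_bdd t ht) ⟨R, ⟨htR, hRb⟩, rfl⟩
  have hrm_le : ∀ t : ℝ, a ≤ t → t ≤ R → rightMax b f t ≤ C := by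
    intro t ht htR
    refine csSup_le ⟨f R, ⟨R, ⟨htR, hRb⟩, rfl⟩⟩ ?_
    rintro _ ⟨y, ⟨hy1, hy2⟩, rfl⟩
    exact hC y (ht.trans hy1) hy2
  -- key pointwise estimate: f R ≤ g x for x ∈ [a, R]
  have hkey : ∀ x : ℝ, a ≤ x → x ≤ R → f R ≤ g x := by
    intro x hax hxR
    have hxb : (x : EReal) < b := coe_lt hxR
    have hnx : 0 < n x := lt_of_lt_of_le hn_pos (hn_mono ⟨le_refl a, hab⟩ ⟨hax, hxb⟩ hax)
    obtain ⟨Cn, hCn⟩ := hn_bdd x hax hxb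
    have hCn0 : 0 ≤ Cn := le_trans (hn_nonneg x hax hxb) (hCn x ⟨hax, le_refl x⟩)
    have hbdd : BddAbove ((fun t => n t * rightMax b f t) '' Icc a x) := by
      refine ⟨Cn * max C 0, ?_⟩
      rintro _ ⟨t, ht, rfl⟩
      have htR : t ≤ R := ht.2.trans hxR
      have h1 : rightMax b f t ≤ max C 0 := le_max_of_le_left (hrm_le t ht.1 htR)
      have h2 : 0 ≤ rightMax b f t := hfR0.trans (hrm_ge t ht.1 htR)
      exact mul_le_mul (hCn t ht) h1 h2 hCn0
    have hle : n x * rightMax b f x ≤ leftMax a (fun t => n t * rightMax b f t) x :=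
      le_csSup hbdd ⟨x, ⟨hax, le_refl x⟩, rfl⟩
    have hle2 : n x * f R ≤ leftMax a (fun t => n t * rightMax b f t) x :=
      le_trans (mul_le_mul_of_nonneg_left (hrm_ge x hax hxR) hnx.le) hle
    have heq : f R = (n x)⁻¹ * (n x * f R) := by
      field_simp
    rw [heq]
    exact mul_le_mul_of_nonneg_left hle2 (inv_nonneg.mpr hnx.le)
  -- deriv m is nonnegative on (a, R]
  have hderiv_nonneg : ∀ x : ℝ, a < x → x ≤ R → 0 ≤ deriv m x := by
    intro x hax hxR
    obtain ⟨c, hxc, hcb⟩ := EReal.exists_between_coe_real (coe_lt hxR)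
    have hxc' : x < c := EReal.coe_lt_coe_iff.mp hxc
    have hmono : MonotoneOn m (Icc x c) := by
      refine (hm_mono.mono ?_).monotoneOn
      intro t ht
      exact ⟨hax.le.trans ht.1, lt_of_le_of_lt (EReal.coe_le_coe_iff.mpr ht.2) hcb⟩
    have hd := (hm_diff x hax (coe_lt hxR)).hasDerivAt
    have hW : HasDerivWithinAt m (deriv m x) (Ioi x) x := hd.hasDerivWithinAt
    rw [hasDerivWithinAt_iff_tendsto_slope' (notMem_Ioi.mpr (le_refl x))] at hW
    have hev : ∀ᶠ y in nhdsWithin x (Ioi x), 0 ≤ slope m x y := by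
      filter_upwards [self_mem_nhdsWithin, nhdsWithin_le_nhds (Iio_mem_nhds hxc')] with y hy hyc
      have hxy : x < y := hy
      rw [slope_def_field]
      refine div_nonneg ?_ (sub_nonneg.mpr hxy.le)
      exact sub_nonneg.mpr (hmono ⟨le_refl x, hxc'.le⟩ ⟨hxy.le, le_of_lt hyc⟩ hxy.le)
    exact ge_of_tendsto hW hev
  -- deriv m is interval integrable on [c, R] for a < c
  have hm'_int : ∀ c : ℝ, a < c → c ≤ R → IntervalIntegrable (deriv m) volume c R := by
    intro c hac hcR
    obtain ⟨D, hD⟩ := hm_bdd c R hac hcR hRb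
    rw [intervalIntegrable_iff_integrableOn_Ioc_of_le hcR]
    refine Measure.integrableOn_of_bounded (M := D) measure_Ioc_lt_top.ne
      (measurable_deriv m).aestronglyMeasurable ?_
    rw [ae_restrict_iff' measurableSet_Ioc]
    exact Filter.Eventually.of_forall fun y hy => by
      simpa [Real.norm_eq_abs] using hD y ⟨hy.1.le, hy.2⟩
  -- m is continuous on [c, R] for a < c
  have hm_cont : ∀ c : ℝ, a < c → c ≤ R → ContinuousOn m (Icc c R) := by
    intro c hac _ x hx
    exact ((hm_diff x (hac.trans_le hx.1) (coe_lt hx.2)).continuousAt).continuousWithinAt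
  set I := ∫ x in r..R, g x * deriv m x with hIdef
  have hmrR : m r < m R := hm_mono ⟨hr, coe_lt hrR.le⟩ ⟨haR, hRb⟩ hrR
  -- main estimate for truncated intervals
  have hstep : ∀ r' ∈ Ioo r R, f R * (m R - m r') ≤ I := by
    intro r' hr'
    have har' : a < r' := lt_of_le_of_lt hr hr'.1
    have hint1 : IntervalIntegrable (fun x => g x * deriv m x) volume r r' :=
      hg_int r r' hr hr'.1.le (coe_lt hr'.2.le)
    have hint2 : IntervalIntegrable (fun x => g x * deriv m x) volume r' R :=
      hg_int r' R har'.le hr'.2.le hRb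
    have hm'int := hm'_int r' har' hr'.2.le
    have hsplit : I = (∫ x in r..r', g x * deriv m x) + ∫ x in r'..R, g x * deriv m x :=
      (intervalIntegral.integral_add_adjacent_intervals hint1 hint2).symm
    have h1 : 0 ≤ ∫ x in r..r', g x * deriv m x := by
      rw [intervalIntegral.integral_of_le hr'.1.le]
      refine setIntegral_nonneg measurableSet_Ioc fun y hy => ?_
      have hay : a < y := lt_of_le_of_lt hr hy.1
      have hyR : y ≤ R := hy.2.trans hr'.2.le
      exact mul_nonneg (hfR0.trans (hkey y hay.le hyR)) (hderiv_nonneg y hay hyR)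
    have hftc : ∫ x in r'..R, deriv m x = m R - m r' :=
      intervalIntegral.integral_eq_sub_of_hasDerivAt_of_le hr'.2.le (hm_cont r' har' hr'.2.le)
        (fun x hx => (hm_diff x (har'.trans hx.1) (coe_lt hx.2.le)).hasDerivAt) hm'int
    have hconst_int : IntervalIntegrable (fun x => f R * deriv m x) volume r' R :=
      hm'int.const_mul _
    have hmono2 : (∫ x in r'..R, f R * deriv m x) ≤ ∫ x in r'..R, g x * deriv m x := by
      refine intervalIntegral.integral_mono_on hr'.2.le hconst_int hint2 fun x hx => ?_
      have hax : a < x := lt_of_lt_of_le har' hx.1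
      exact mul_le_mul_of_nonneg_right (hkey x hax.le hx.2) (hderiv_nonneg x hax hx.2)
    have h2 : f R * (m R - m r') ≤ ∫ x in r'..R, g x * deriv m x := by
      calc f R * (m R - m r') = ∫ x in r'..R, f R * deriv m x := by
            rw [intervalIntegral.integral_const_mul, hftc]
        _ ≤ _ := hmono2
    rw [hsplit]
    linarith
  -- pass to the limit r' → r⁺
  have hNB : (nhdsWithin r (Ioo r R)).NeBot := left_nhdsWithin_Ioo_neBot hrR
  have hmlim : Tendsto m (nhdsWithin r (Ioo r R)) (nhds (m r)) := by
    rcases eq_or_lt_of_le hr with heq | hlt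
    · subst heq
      exact hm_rc.mono_left (nhdsWithin_mono _ (fun x hx => hx.1.le))
    · exact ((hm_diff r hlt (coe_lt hrR.le)).continuousAt).tendsto.mono_left nhdsWithin_le_nhds
  have hlim : Tendsto (fun r' => f R * (m R - m r')) (nhdsWithin r (Ioo r R))
      (nhds (f R * (m R - m r))) := (tendsto_const_nhds.sub hmlim).const_mul _
  have hfin : f R * (m R - m r) ≤ I := by
    refine le_of_tendsto hlim ?_
    filter_upwards [self_mem_nhdsWithin] with r' hr'
    exact hstep r' hr'
  -- conclude
  have hpos : 0 < m R - m r := sub_pos.mpr hmrR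
  rw [intAvg, le_inv_mul_iff₀ hpos]
  calc (m R - m r) * f R = f R * (m R - m r) := mul_comm _ _
    _ ≤ I := hfin
end

section
/- Let a ∈ ℝ and b ∈ ℝ ∪ {+∞} with a < b. Let f : [a,b) → [0,∞) satisfy sup_{[a,b)} f < +∞ and f(x) → 0 as x → b⁻, and let n : [a,b) → [0,∞) be increasing with n(a) > 0, bounded on every interval [a,b'] ⊂ [a,b), and n(x) → +∞ as x → b⁻. Then (1/n(R)) · m^←[n·m^→[f]](R) → 0 as R → b⁻. -/
open MeasureTheory Set Filter

/-!
Fix `ε > 0` and a point `R₀ < b` beyond which `f ≤ ε`. For `t ≤ R₀` the product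
`n t · m^→[f](t)` is at most `n R₀ · sup f`, a constant; for `R₀ ≤ t ≤ R` it is at most
`n R · ε` by monotonicity of `n`. Dividing by `n R → ∞` leaves at most `ε` in the limit.
-/

theorem eventually_toBFilter_iff {b : EReal} (hb : b ≠ ⊥) {p : ℝ → Prop} :
    (∀ᶠ x in toBFilter b, p x) ↔
      ∃ c : ℝ, (c : EReal) < b ∧ ∀ x : ℝ, c ≤ x → (x : EReal) < b → p x := by
  have hbasis := (nhdsLT_basis_of_exists_lt ⟨⊥, bot_lt_iff_ne_bot.2 hb⟩).comap Real.toEReal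
  rw [toBFilter, hbasis.eventually_iff]
  constructor
  · rintro ⟨c', hc'b, hc'⟩
    obtain ⟨c, hc'c, hcb⟩ := EReal.exists_between_coe_real hc'b
    exact ⟨c, hcb, fun x hcx hxb => hc' ⟨hc'c.trans_le (EReal.coe_le_coe_iff.2 hcx), hxb⟩⟩
  · rintro ⟨c, hcb, hc⟩
    exact ⟨c, hcb, fun x hx => hc x (EReal.coe_lt_coe_iff.1 hx.1).le hx.2⟩

theorem eventually_ge_toBFilter {b : EReal} {c : ℝ} (hcb : (c : EReal) < b) :
    ∀ᶠ R in toBFilter b, c ≤ R ∧ (R : EReal) < b :=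
  (eventually_toBFilter_iff (ne_bot_of_gt hcb)).2 ⟨c, hcb, fun _ => And.intro⟩

theorem exists_ge_forall_of_eventually_toBFilter {a : ℝ} {b : EReal} (hab : (a : EReal) < b)
    {p : ℝ → Prop} (h : ∀ᶠ x in toBFilter b, p x) :
    ∃ R₀ : ℝ, a ≤ R₀ ∧ (R₀ : EReal) < b ∧ ∀ x : ℝ, R₀ ≤ x → (x : EReal) < b → p x := by
  obtain ⟨c, hcb, hc⟩ := (eventually_toBFilter_iff (ne_bot_of_gt hab)).1 h
  refine ⟨max a c, le_max_left a c, ?_, fun x hx => hc x ((le_max_right a c).trans hx)⟩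
  rw [EReal.coe_strictMono.monotone.map_max]
  exact max_lt hab hcb

theorem Icc_subset_of_coe_lt {a R : ℝ} {b : EReal} (hRb : (R : EReal) < b) :
    Icc a R ⊆ {x : ℝ | a ≤ x ∧ (x : EReal) < b} :=
  fun _ ht => ⟨ht.1, (EReal.coe_le_coe_iff.2 ht.2).trans_lt hRb⟩

section RightMax

variable {b : EReal} {f : ℝ → ℝ} {r c : ℝ}

theorem rightMax_nonneg (hf : ∀ x : ℝ, r ≤ x → (x : EReal) < b → 0 ≤ f x) :
    0 ≤ rightMax b f r :=
  Real.sSup_nonneg <| by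
    rintro _ ⟨x, ⟨hrx, hxb⟩, rfl⟩
    exact hf x hrx hxb

theorem rightMax_le (hc : 0 ≤ c) (hf : ∀ x : ℝ, r ≤ x → (x : EReal) < b → f x ≤ c) :
    rightMax b f r ≤ c :=
  Real.sSup_le (by rintro _ ⟨x, ⟨hrx, hxb⟩, rfl⟩; exact hf x hrx hxb) hc

end RightMax

section LeftMax

variable {a r c : ℝ} {g : ℝ → ℝ}

theorem leftMax_nonneg (hg : ∀ t ∈ Icc a r, 0 ≤ g t) : 0 ≤ leftMax a g r :=
  Real.sSup_nonneg <| by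
    rintro _ ⟨t, ht, rfl⟩
    exact hg t ht

theorem leftMax_le (hc : 0 ≤ c) (hg : ∀ t ∈ Icc a r, g t ≤ c) : leftMax a g r ≤ c :=
  Real.sSup_le (by rintro _ ⟨t, ht, rfl⟩; exact hg t ht) hc

theorem leftMax_mul_le {n m : ℝ → ℝ} {R₀ R C ε : ℝ} (hR₀ : R₀ ∈ Icc a R)
    (hn_nonneg : ∀ t ∈ Icc a R, 0 ≤ n t) (hn_mono : MonotoneOn n (Icc a R))
    (hm_nonneg : ∀ t ∈ Icc a R, 0 ≤ m t) (hm_le : ∀ t ∈ Icc a R₀, m t ≤ C)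
    (hm_le_of_ge : ∀ t ∈ Icc R₀ R, m t ≤ ε) :
    leftMax a (fun t => n t * m t) R ≤ n R₀ * C + n R * ε := by
  have haR : a ∈ Icc a R := ⟨le_rfl, hR₀.1.trans hR₀.2⟩
  have hRR : R ∈ Icc a R := ⟨haR.2, le_rfl⟩
  have hC : 0 ≤ C := (hm_nonneg a haR).trans (hm_le a ⟨le_rfl, hR₀.1⟩)
  have hε : 0 ≤ ε := (hm_nonneg R hRR).trans (hm_le_of_ge R ⟨hR₀.2, le_rfl⟩)
  have hnR₀ := hn_nonneg R₀ hR₀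
  have hnR := hn_nonneg R hRR
  refine leftMax_le (by positivity) fun t ht => ?_
  rcases le_total t R₀ with htR₀ | hR₀t
  · have : n t * m t ≤ n R₀ * C :=
      mul_le_mul (hn_mono ht hR₀ htR₀) (hm_le t ⟨ht.1, htR₀⟩) (hm_nonneg t ht) hnR₀
    linarith [mul_nonneg hnR hε]
  · have : n t * m t ≤ n R * ε :=
      mul_le_mul (hn_mono ht hRR ht.2) (hm_le_of_ge t ⟨hR₀t, ht.2⟩) (hm_nonneg t ht) hnR
    linarith [mul_nonneg hnR₀ hC]

end LeftMax

section MaximizationEstimates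

variable {a R₀ R C ε : ℝ} {b : EReal} {f n : ℝ → ℝ}

theorem leftMax_mul_rightMax_nonneg (hf_nonneg : ∀ x : ℝ, a ≤ x → (x : EReal) < b → 0 ≤ f x)
    (hn_nonneg : ∀ x : ℝ, a ≤ x → (x : EReal) < b → 0 ≤ n x) (hRb : (R : EReal) < b) :
    0 ≤ leftMax a (fun t => n t * rightMax b f t) R :=
  leftMax_nonneg fun t ht =>
    have ht' := Icc_subset_of_coe_lt hRb ht
    mul_nonneg (hn_nonneg t ht'.1 ht'.2)
      (rightMax_nonneg fun x htx hxb => hf_nonneg x (ht.1.trans htx) hxb)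

theorem leftMax_mul_rightMax_le (hf_nonneg : ∀ x : ℝ, a ≤ x → (x : EReal) < b → 0 ≤ f x)
    (hf_le : ∀ x : ℝ, a ≤ x → (x : EReal) < b → f x ≤ C)
    (hf_le_of_ge : ∀ x : ℝ, R₀ ≤ x → (x : EReal) < b → f x ≤ ε)
    (hn_nonneg : ∀ x : ℝ, a ≤ x → (x : EReal) < b → 0 ≤ n x)
    (hn_mono : MonotoneOn n {x : ℝ | a ≤ x ∧ (x : EReal) < b})
    (haR₀ : a ≤ R₀) (hR₀R : R₀ ≤ R) (hRb : (R : EReal) < b) :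
    leftMax a (fun t => n t * rightMax b f t) R ≤ n R₀ * C + n R * ε := by
  have hdom := Icc_subset_of_coe_lt (a := a) hRb
  have haR : a ≤ R := haR₀.trans hR₀R
  have hab := (hdom ⟨le_rfl, haR⟩).2
  have hC : 0 ≤ C := (hf_nonneg a le_rfl hab).trans (hf_le a le_rfl hab)
  have hε : 0 ≤ ε := (hf_nonneg R haR hRb).trans (hf_le_of_ge R hR₀R hRb)
  exact leftMax_mul_le ⟨haR₀, hR₀R⟩ (fun t ht => hn_nonneg t (hdom ht).1 (hdom ht).2)
    (hn_mono.mono hdom)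
    (fun t ht => rightMax_nonneg fun x htx hxb => hf_nonneg x (ht.1.trans htx) hxb)
    (fun t ht => rightMax_le hC fun x htx hxb => hf_le x (ht.1.trans htx) hxb)
    (fun t ht => rightMax_le hε fun x htx hxb => hf_le_of_ge x (ht.1.trans htx) hxb)

end MaximizationEstimates

theorem stmt_9_general (a : ℝ) (b : EReal) (hab : (a : EReal) < b) (f n : ℝ → ℝ)
    (hf_nonneg : ∀ x : ℝ, a ≤ x → (x : EReal) < b → 0 ≤ f x)
    (hf_bdd : ∃ C : ℝ, ∀ x : ℝ, a ≤ x → (x : EReal) < b → f x ≤ C)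
    (hf_zero : Filter.Tendsto f (toBFilter b) (nhds 0))
    (hn_nonneg : ∀ x : ℝ, a ≤ x → (x : EReal) < b → 0 ≤ n x)
    (hn_mono : MonotoneOn n {x : ℝ | a ≤ x ∧ (x : EReal) < b})
    (hn_top : Filter.Tendsto n (toBFilter b) Filter.atTop) :
    Filter.Tendsto
      (fun R => (n R)⁻¹ * leftMax a (fun t => n t * rightMax b f t) R)
      (toBFilter b) (nhds 0) := by
  obtain ⟨C, hC⟩ := hf_bdd
  refine tendsto_order.2 ⟨fun δ hδ => ?_, fun ε hε => ?_⟩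
  · filter_upwards [eventually_ge_toBFilter hab] with R ⟨haR, hRb⟩
    exact hδ.trans_le (mul_nonneg (inv_nonneg.2 (hn_nonneg R haR hRb))
      (leftMax_mul_rightMax_nonneg hf_nonneg hn_nonneg hRb))
  obtain ⟨R₀, haR₀, hR₀b, hR₀⟩ := exists_ge_forall_of_eventually_toBFilter hab
    (hf_zero.eventually (ge_mem_nhds (half_pos hε)))
  have hsmall : ∀ᶠ R in toBFilter b, n R₀ * C / n R < ε / 2 :=
    (tendsto_const_nhds.div_atTop hn_top).eventually (gt_mem_nhds (half_pos hε))
  filter_upwards [eventually_ge_toBFilter hR₀b, hsmall, hn_top.eventually_gt_atTop 0]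
    with R ⟨hR₀R, hRb⟩ hsmall hnR
  calc (n R)⁻¹ * leftMax a (fun t => n t * rightMax b f t) R
      ≤ (n R)⁻¹ * (n R₀ * C + n R * (ε / 2)) := by
        gcongr
        exact leftMax_mul_rightMax_le hf_nonneg hC hR₀ hn_nonneg hn_mono haR₀ hR₀R hRb
    _ = n R₀ * C / n R + ε / 2 := by field_simp
    _ < ε := by linarith

theorem stmt_9 (a : ℝ) (b : EReal) (hab : (a : EReal) < b) (f n : ℝ → ℝ)
    (hf_nonneg : ∀ x : ℝ, a ≤ x → (x : EReal) < b → 0 ≤ f x)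
    (hf_bdd : ∃ C : ℝ, ∀ x : ℝ, a ≤ x → (x : EReal) < b → f x ≤ C)
    (hf_zero : Filter.Tendsto f (toBFilter b) (nhds 0))
    (hn_nonneg : ∀ x : ℝ, a ≤ x → (x : EReal) < b → 0 ≤ n x)
    (hn_mono : MonotoneOn n {x : ℝ | a ≤ x ∧ (x : EReal) < b})
    (hn_pos : 0 < n a)
    (hn_bdd : ∀ b' : ℝ, a ≤ b' → (b' : EReal) < b →
      ∃ C : ℝ, ∀ x ∈ Set.Icc a b', n x ≤ C)
    (hn_top : Filter.Tendsto n (toBFilter b) Filter.atTop) :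
    Filter.Tendsto
      (fun R => (n R)⁻¹ * leftMax a (fun t => n t * rightMax b f t) R)
      (toBFilter b) (nhds 0) :=
  stmt_9_general a b hab f n hf_nonneg hf_bdd hf_zero hn_nonneg hn_mono hn_top
end

section
/- Let 0 < r₀ ∈ ℝ. If d : [r₀,+∞) → [0,∞) is a function (bounded, with d(R) → 0 as R → +∞), then there exists an increasing function Q : [r₀,+∞) → [0,∞) such that (i) Q(x)/x → 0 as x → +∞, and (ii) d(R) · ln(R/r) ≤ ∫_r^R (Q(x)/x²) dx for all r₀ ≤ r < R < +∞. -/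
/-! Let `s(x) = sup_{t ≥ x} d(t)`, the least nonincreasing majorant of `d`; it tends to `0`.
Take for `Q` the least nondecreasing majorant of `x ↦ x s(x)`. Splitting `[r₀, x]` at a point
`b` with `s(b)` small gives `Q(x) ≤ max (Q(b), x s(b))`, so `Q(x)/x → 0`. For `r ≤ x ≤ R` we have
`d(R) ≤ s(x) ≤ Q(x)/x`, and integrating `d(R)/x ≤ Q(x)/x²` over `[r, R]` gives the inequality. -/

open MeasureTheory Set Filter Topology

noncomputable def tailSup (f : ℝ → ℝ) (a x : ℝ) : ℝ := sSup (f '' Ici (max x a))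

noncomputable def runningSup (g : ℝ → ℝ) (a x : ℝ) : ℝ := sSup (g '' Icc a (max x a))

section TailSup

variable {f : ℝ → ℝ} {a : ℝ}

theorem bddAbove_image_Ici_max (hf : BddAbove (f '' Ici a)) (x : ℝ) :
    BddAbove (f '' Ici (max x a)) :=
  hf.mono (image_mono (Ici_subset_Ici.2 (le_max_right x a)))

theorem tailSup_antitone (hf : BddAbove (f '' Ici a)) : Antitone (tailSup f a) := fun _ _ hxy =>
  csSup_le_csSup (bddAbove_image_Ici_max hf _) (nonempty_Ici.image f)
    (image_mono (Ici_subset_Ici.2 (max_le_max hxy le_rfl)))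

theorem le_tailSup (hf : BddAbove (f '' Ici a)) {x R : ℝ} (hxR : x ≤ R) (haR : a ≤ R) :
    f R ≤ tailSup f a x :=
  le_csSup (bddAbove_image_Ici_max hf x) ⟨R, max_le hxR haR, rfl⟩

theorem tailSup_nonneg (hf : BddAbove (f '' Ici a)) (hf₀ : ∀ t ∈ Ici a, 0 ≤ f t) (x : ℝ) :
    0 ≤ tailSup f a x :=
  (hf₀ _ (le_max_right x a)).trans (le_tailSup hf (le_max_left x a) (le_max_right x a))

theorem tendsto_tailSup (hf : BddAbove (f '' Ici a)) (hf₀ : ∀ t ∈ Ici a, 0 ≤ f t)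
    (hlim : Tendsto f atTop (𝓝 0)) : Tendsto (tailSup f a) atTop (𝓝 0) := by
  refine tendsto_order.2 ⟨fun ε hε => .of_forall fun x => hε.trans_le (tailSup_nonneg hf hf₀ x),
    fun ε hε => ?_⟩
  obtain ⟨ε', hε'₀, hε'⟩ := exists_between hε
  obtain ⟨N, hN⟩ := (hlim.eventually (ge_mem_nhds hε'₀)).exists_forall_of_atTop
  filter_upwards [eventually_ge_atTop N] with x hx
  refine lt_of_le_of_lt (csSup_le (nonempty_Ici.image f) ?_) hε'
  rintro _ ⟨t, ht, rfl⟩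
  exact hN t (hx.trans ((le_max_left x a).trans ht))

end TailSup

section RunningSup

variable {g : ℝ → ℝ} {a : ℝ}

theorem runningSup_monotone (hg : ∀ b, BddAbove (g '' Icc a b)) : Monotone (runningSup g a) :=
  fun x _ hxy => csSup_le_csSup (hg _) ((nonempty_Icc.2 (le_max_right x a)).image g)
    (image_mono (Icc_subset_Icc le_rfl (max_le_max hxy le_rfl)))

theorem le_runningSup (hg : ∀ b, BddAbove (g '' Icc a b)) {x y : ℝ} (hay : a ≤ y)
    (hyx : y ≤ max x a) : g y ≤ runningSup g a x :=
  le_csSup (hg _) ⟨y, ⟨hay, hyx⟩, rfl⟩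

theorem runningSup_le_max (hg : ∀ b, BddAbove (g '' Icc a b)) {b x c : ℝ} (hab : a ≤ b)
    (hbx : b ≤ x) (hc : ∀ y ∈ Ioc b x, g y ≤ c) : runningSup g a x ≤ max (runningSup g a b) c := by
  refine csSup_le ((nonempty_Icc.2 (le_max_right x a)).image g) ?_
  rintro _ ⟨y, ⟨hay, hyx⟩, rfl⟩
  rw [max_eq_left (hab.trans hbx)] at hyx
  rcases le_or_gt y b with hyb | hby
  · exact le_max_of_le_left (le_runningSup hg hay (le_max_of_le_left hyb))
  · exact le_max_of_le_right (hc y ⟨hby, hyx⟩)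

end RunningSup

section MulRunningSup

variable {s : ℝ → ℝ} {a : ℝ}

theorem bddAbove_image_mul_Icc (ha : 0 ≤ a) (hs : Antitone s) (hs₀ : ∀ x, 0 ≤ s x) (b : ℝ) :
    BddAbove ((fun y => y * s y) '' Icc a b) := by
  refine ⟨b * s a, ?_⟩
  rintro _ ⟨y, ⟨hay, hyb⟩, rfl⟩
  exact mul_le_mul hyb (hs hay) (hs₀ y) (ha.trans (hay.trans hyb))

theorem runningSup_mul_nonneg (ha : 0 ≤ a) (hs : Antitone s) (hs₀ : ∀ x, 0 ≤ s x) (x : ℝ) :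
    0 ≤ runningSup (fun y => y * s y) a x :=
  (mul_nonneg ha (hs₀ a)).trans
    (le_runningSup (bddAbove_image_mul_Icc ha hs hs₀) le_rfl (le_max_right x a))

theorem tendsto_runningSup_mul_div (ha : 0 ≤ a) (hs : Antitone s) (hs₀ : ∀ x, 0 ≤ s x)
    (hlim : Tendsto s atTop (𝓝 0)) :
    Tendsto (fun x => runningSup (fun y => y * s y) a x / x) atTop (𝓝 0) := by
  set Q := runningSup (fun y => y * s y) a
  have hbdd := bddAbove_image_mul_Icc ha hs hs₀
  refine tendsto_order.2 ⟨fun ε hε => ?_, fun ε hε => ?_⟩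
  · filter_upwards [eventually_gt_atTop 0] with x hx
    exact hε.trans_le (div_nonneg (runningSup_mul_nonneg ha hs hs₀ x) hx.le)
  obtain ⟨b, hsb, hab⟩ := ((hlim.eventually (gt_mem_nhds hε)).and (eventually_ge_atTop a)).exists
  have hQb : Tendsto (fun x => Q b / x) atTop (𝓝 0) := tendsto_const_nhds.div_atTop tendsto_id
  filter_upwards [hQb.eventually (gt_mem_nhds hε), eventually_ge_atTop b,
    eventually_gt_atTop 0] with x hQbx hbx hx
  have hsplit : Q x ≤ max (Q b) (x * s b) :=
    runningSup_le_max hbdd hab hbx fun y hy =>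
      mul_le_mul hy.2 (hs hy.1.le) (hs₀ y) hx.le
  calc Q x / x ≤ max (Q b) (x * s b) / x := div_le_div_of_nonneg_right hsplit hx.le
    _ = max (Q b / x) (s b) := by rw [← max_div_div_right hx.le, mul_div_cancel_left₀ _ hx.ne']
    _ < ε := max_lt hQbx hsb

end MulRunningSup

theorem mul_log_div_le_integral_div_sq {Q : ℝ → ℝ} {c r R : ℝ} (hr : 0 < r) (hrR : r ≤ R)
    (hQ : IntervalIntegrable Q volume r R) (hc : ∀ x ∈ Icc r R, c * x ≤ Q x) :
    c * Real.log (R / r) ≤ ∫ x in r..R, Q x / x ^ 2 := by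
  have hpos : ∀ x ∈ uIcc r R, 0 < x := fun x hx => hr.trans_le (uIcc_of_le hrR ▸ hx).1
  have hint_c : IntervalIntegrable (fun x => c / x) volume r R :=
    (continuousOn_const.div continuousOn_id fun x hx => (hpos x hx).ne').intervalIntegrable
  have hint_Q : IntervalIntegrable (fun x => Q x / x ^ 2) volume r R := by
    simpa only [div_eq_mul_inv, Pi.inv_apply] using hQ.mul_continuousOn
      ((continuous_pow 2).continuousOn.inv₀ fun x hx => pow_ne_zero 2 (hpos x hx).ne')
  calc c * Real.log (R / r) = ∫ x in r..R, c / x := by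
        simp_rw [div_eq_mul_one_div c, intervalIntegral.integral_const_mul,
          integral_one_div fun h => (hpos 0 h).false]
    _ ≤ ∫ x in r..R, Q x / x ^ 2 := by
      refine intervalIntegral.integral_mono_on hrR hint_c hint_Q fun x hx => ?_
      have hx₀ : 0 < x := hr.trans_le hx.1
      rw [div_le_div_iff₀ hx₀ (by positivity)]
      nlinarith [hc x hx]

theorem stmt_12 (r₀ : ℝ) (hr₀ : 0 < r₀) (d : ℝ → ℝ)
    (hd_nonneg : ∀ R ∈ Set.Ici r₀, 0 ≤ d R)
    (hd_bdd : ∃ C : ℝ, ∀ R ∈ Set.Ici r₀, d R ≤ C)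
    (hd_lim : Filter.Tendsto d Filter.atTop (nhds 0)) :
    ∃ Q : ℝ → ℝ,
      MonotoneOn Q (Set.Ici r₀) ∧
      (∀ x ∈ Set.Ici r₀, 0 ≤ Q x) ∧
      Filter.Tendsto (fun x => Q x / x) Filter.atTop (nhds 0) ∧
      (∀ r R : ℝ, r₀ ≤ r → r < R →
        d R * Real.log (R / r) ≤ ∫ x in r..R, Q x / x ^ 2) := by
  obtain ⟨C, hC⟩ := hd_bdd
  have hbdd : BddAbove (d '' Ici r₀) := ⟨C, forall_mem_image.2 hC⟩
  set s := tailSup d r₀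
  have hs := tailSup_antitone hbdd
  have hs₀ := tailSup_nonneg hbdd hd_nonneg
  have hQ := runningSup_monotone (bddAbove_image_mul_Icc hr₀.le hs hs₀)
  refine ⟨runningSup (fun y => y * s y) r₀, hQ.monotoneOn _,
    fun x _ => runningSup_mul_nonneg hr₀.le hs hs₀ x,
    tendsto_runningSup_mul_div hr₀.le hs hs₀ (tendsto_tailSup hbdd hd_nonneg hd_lim),
    fun r R hr hrR => mul_log_div_le_integral_div_sq (hr₀.trans_le hr) hrR.le
      (hQ.monotoneOn _).intervalIntegrable fun x hx => ?_⟩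
  calc d R * x ≤ s x * x := by
        gcongr
        · exact hr₀.le.trans (hr.trans hx.1)
        · exact le_tailSup hbdd hx.2 (hr.trans hrR.le)
    _ = x * s x := mul_comm _ _
    _ ≤ _ := le_runningSup (bddAbove_image_mul_Icc hr₀.le hs hs₀) (hr.trans hx.1) (le_max_left _ _)
end
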